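/- Let u ∈ C²(Ω) on an open set Ω ⊂ ℝⁿ with u and its second derivatives bounded. Then sup_Ω |∂u| ≤ 2 (sup_Ω |u|)^{1/2} (sup_Ω |∂²u|)^{1/2}. -/

import Mathlib

open Set Filter MeasureTheory

/-- One-dimensional Landau-type inequality: if `|f| ≤ M` and `|f''| ≤ K` everywhere on `ℝ`,
then `|f'(0)| ≤ 2 √M √K`. -/
lemma landau_one_dim (f f' f'' : ℝ → ℝ) (hf' : ∀ t, HasDerivAt f (f' t) t)
    (hf'' : ∀ t, HasDerivAt f' (f'' t) t) (M K : ℝ)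
    (hM : ∀ t, |f t| ≤ M) (hK : ∀ t, |f'' t| ≤ K) :
    |f' 0| ≤ 2 * Real.sqrt M * Real.sqrt K := by
  have hM0 : 0 ≤ M := le_trans (abs_nonneg _) (hM 0)
  have hK0 : 0 ≤ K := le_trans (abs_nonneg _) (hK 0)
  -- Step A: |f' s - f' 0| ≤ K * s for s ≥ 0
  have stepA : ∀ s : ℝ, 0 ≤ s → |f' s - f' 0| ≤ K * s := by
    intro s hs
    have := norm_image_sub_le_of_norm_deriv_le_segment'
      (f := f') (f' := f'') (a := 0) (b := s)
      (fun y _ => (hf'' y).hasDerivWithinAt) (fun y _ => hK y) s (right_mem_Icc.2 hs)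
    simpa using this
  -- Step B: |f t - f 0 - t * f' 0| ≤ K * t^2 / 2 for t ≥ 0
  have stepB : ∀ t : ℝ, 0 ≤ t → |f t - f 0 - t * f' 0| ≤ K * t ^ 2 / 2 := by
    intro t ht
    have key := image_norm_le_of_norm_deriv_right_le_deriv_boundary
      (f := fun s => f s - f 0 - s * f' 0) (a := 0) (b := t)
      (f' := fun s => f' s - f' 0)
      (B := fun s => K * s ^ 2 / 2) (B' := fun s => K * s)
      (by
        have hc : Continuous f := by
          have : Differentiable ℝ f := fun t => (hf' t).differentiableAt
          exact this.continuous
        exact (((hc.sub continuous_const).sub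
          (continuous_id.mul continuous_const))).continuousOn)
      (fun s _ => by
        have : HasDerivAt (fun s => f s - f 0 - s * f' 0) (f' s - f' 0) s := by
          exact (((hf' s).sub (hasDerivAt_const s (f 0))).sub
            ((hasDerivAt_id s).mul_const (f' 0))).congr_deriv (by ring)
        exact this.hasDerivWithinAt)
      (by simp)
      (fun s => by
        have : HasDerivAt (fun s : ℝ => K * s ^ 2 / 2) (K * s) s := by
          have := ((hasDerivAt_pow 2 s).const_mul K).div_const 2
          simpa using this.congr_deriv (by ring)
        exact this)
      (fun s hs => by
        have := stepA s hs.1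
        simpa using this)
    have := key (right_mem_Icc.2 ht)
    simpa using this
  -- Step C: for all t ≥ 0, t * |f' 0| ≤ 2 * M + K * t ^ 2 / 2
  have stepC : ∀ t : ℝ, 0 ≤ t → t * |f' 0| ≤ 2 * M + K * t ^ 2 / 2 := by
    intro t ht
    have h1 := stepB t ht
    have h2 := hM t
    have h3 := hM 0
    have : |t * f' 0| ≤ 2 * M + K * t ^ 2 / 2 := by
      calc |t * f' 0| = |f t - f 0 - (f t - f 0 - t * f' 0)| := by ring_nf
        _ ≤ |f t| + |f 0| + |f t - f 0 - t * f' 0| := by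
            have := abs_sub (f t - f 0) (f t - f 0 - t * f' 0)
            calc |f t - f 0 - (f t - f 0 - t * f' 0)|
                ≤ |f t - f 0| + |f t - f 0 - t * f' 0| := abs_sub _ _
              _ ≤ |f t| + |f 0| + |f t - f 0 - t * f' 0| := by
                  have := abs_sub (f t) (f 0)
                  linarith
        _ ≤ 2 * M + K * t ^ 2 / 2 := by linarith
    calc t * |f' 0| = |t * f' 0| := by rw [abs_mul, abs_of_nonneg ht]
      _ ≤ 2 * M + K * t ^ 2 / 2 := this
  -- Algebra: conclude
  set A := |f' 0| with hA
  have hA0 : 0 ≤ A := abs_nonneg _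
  rcases eq_or_lt_of_le hA0 with h0 | hApos
  · rw [← h0]
    positivity
  · have hKpos : 0 < K := by
      by_contra hc
      push_neg at hc
      have hKz : K = 0 := le_antisymm hc hK0
      have := stepC ((2 * M + 1) / A) (by positivity)
      rw [hKz] at this
      have h2 : (2 * M + 1) / A * A = 2 * M + 1 := div_mul_cancel₀ _ hApos.ne'
      nlinarith
    have hAsq : A ^ 2 ≤ 4 * M * K := by
      have := stepC (A / K) (by positivity)
      have hAK : A / K * A = A ^ 2 / K := by ring
      have h2 : K * (A / K) ^ 2 / 2 = A ^ 2 / (2 * K) := by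
        field_simp
      rw [hAK, h2] at this
      have h3 : A ^ 2 / K - A ^ 2 / (2 * K) = A ^ 2 / (2 * K) := by
        field_simp
        ring
      have h4 : A ^ 2 / (2 * K) ≤ 2 * M := by linarith
      calc A ^ 2 = A ^ 2 / (2 * K) * (2 * K) := by field_simp
        _ ≤ 2 * M * (2 * K) := by
            apply mul_le_mul_of_nonneg_right h4
            positivity
        _ = 4 * M * K := by ring
    have hsM : Real.sqrt M ^ 2 = M := Real.sq_sqrt hM0
    have hsK : Real.sqrt K ^ 2 = K := Real.sq_sqrt hK0
    nlinarith [Real.sqrt_nonneg M, Real.sqrt_nonneg K,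
      mul_nonneg (Real.sqrt_nonneg M) (Real.sqrt_nonneg K)]

/-- Gagliardo–Nirenberg interpolation inequality in sup-norm form on `ℝⁿ`:
if `|u| ≤ M` and `|∂²u| ≤ K` everywhere, then `|∂u| ≤ 2 M^{1/2} K^{1/2}` everywhere. -/
theorem stmt4 (n : ℕ) (u : EuclideanSpace ℝ (Fin n) → ℝ) (hu : ContDiff ℝ 2 u)
    (M K : ℝ) (hM : ∀ x, |u x| ≤ M) (hK : ∀ x, ‖iteratedFDeriv ℝ 2 u x‖ ≤ K) :
    ∀ x, ‖fderiv ℝ u x‖ ≤ 2 * Real.sqrt M * Real.sqrt K := by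
  intro x
  have hM0 : 0 ≤ M := le_trans (abs_nonneg _) (hM x)
  have hK0 : 0 ≤ K := le_trans (norm_nonneg _) (hK x)
  have hd1 : Differentiable ℝ u := hu.differentiable (by norm_num)
  have hd2 : Differentiable ℝ (fderiv ℝ u) := by
    have h1 : ContDiff ℝ 1 (fderiv ℝ u) :=
      hu.fderiv_right (m := 1) (by norm_num)
    exact h1.differentiable (by norm_num)
  -- key estimate for unit-ball vectors
  have key : ∀ v : EuclideanSpace ℝ (Fin n), ‖v‖ ≤ 1 →
      |fderiv ℝ u x v| ≤ 2 * Real.sqrt M * Real.sqrt K := by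
    intro v hv
    have hg : ∀ t : ℝ, HasDerivAt (fun s : ℝ => x + s • v) v t := by
      intro t
      simpa using (((hasDerivAt_id t).smul_const v).const_add x)
    have hf' : ∀ t : ℝ, HasDerivAt (fun s : ℝ => u (x + s • v))
        (fderiv ℝ u (x + t • v) v) t := fun t =>
      ((hd1 (x + t • v)).hasFDerivAt).comp_hasDerivAt t (hg t)
    have hf'' : ∀ t : ℝ, HasDerivAt (fun s : ℝ => fderiv ℝ u (x + s • v) v)
        (fderiv ℝ (fderiv ℝ u) (x + t • v) v v) t := by
      intro t
      have h1 : HasDerivAt (fun s : ℝ => fderiv ℝ u (x + s • v))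
          (fderiv ℝ (fderiv ℝ u) (x + t • v) v) t :=
        ((hd2 (x + t • v)).hasFDerivAt).comp_hasDerivAt t (hg t)
      have := h1.clm_apply (hasDerivAt_const t v)
      simpa using this
    have hbound : ∀ t : ℝ, |fderiv ℝ (fderiv ℝ u) (x + t • v) v v| ≤ K := by
      intro t
      have heq : fderiv ℝ (fderiv ℝ u) (x + t • v) v v
          = iteratedFDeriv ℝ 2 u (x + t • v) ![v, v] := by
        rw [iteratedFDeriv_two_apply]
        simp
      rw [heq, ← Real.norm_eq_abs]
      calc ‖iteratedFDeriv ℝ 2 u (x + t • v) ![v, v]‖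
          ≤ ‖iteratedFDeriv ℝ 2 u (x + t • v)‖ * ∏ i : Fin 2, ‖![v, v] i‖ :=
            (iteratedFDeriv ℝ 2 u (x + t • v)).le_opNorm _
        _ = ‖iteratedFDeriv ℝ 2 u (x + t • v)‖ * (‖v‖ * ‖v‖) := by
            simp [Fin.prod_univ_two]
        _ ≤ K * (1 * 1) := by
            apply mul_le_mul (hK _) (by nlinarith [norm_nonneg v]) (by positivity) hK0
        _ = K := by ring
    have := landau_one_dim (fun s => u (x + s • v))
      (fun s => fderiv ℝ u (x + s • v) v)
      (fun s => fderiv ℝ (fderiv ℝ u) (x + s • v) v v)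
      hf' hf'' M K (fun t => hM _) hbound
    simpa using this
  -- conclude via operator norm
  apply ContinuousLinearMap.opNorm_le_bound _ (by positivity)
  intro v
  rcases eq_or_ne v 0 with rfl | hv
  · simp
  · have hvn : 0 < ‖v‖ := norm_pos_iff.mpr hv
    have hunit : ‖(‖v‖⁻¹ • v : EuclideanSpace ℝ (Fin n))‖ ≤ 1 := by
      rw [norm_smul, norm_inv, norm_norm, inv_mul_cancel₀ hvn.ne']
    have h := key (‖v‖⁻¹ • v) hunit
    rw [ContinuousLinearMap.map_smul, smul_eq_mul, abs_mul, abs_inv, abs_norm] at h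
    have := mul_le_mul_of_nonneg_left h hvn.le
    rw [Real.norm_eq_abs]
    calc |fderiv ℝ u x v| = ‖v‖ * (‖v‖⁻¹ * |fderiv ℝ u x v|) := by
          field_simp
      _ ≤ ‖v‖ * (2 * Real.sqrt M * Real.sqrt K) := this
      _ = 2 * Real.sqrt M * Real.sqrt K * ‖v‖ := by ring
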